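/- Let n ≥ 1, let k : Fin n → ℤ, and let s = ∑ i, k i. Define the extended balance vector k' : Fin (n + 1) → ℤ by k' i = k i for i < n and k' n = −s (so that ∑ i, k' i = 0). Then the following are equivalent: (1) there exists a nonempty subset S ⊆ Fin n with ∑ i ∈ S, k i = 0; (2) s = 0, or there exists a list L of transactions on Fin (n + 1) that settles k' with L.length < n. -/

import Mathlib

/-- A transaction `(i, j, a)`: participant `i` pays amount `a` to participant `j`. -/
abbrev Txn (m : ℕ) := Fin m × Fin m × ℤ

/-- All transactions in the list are valid: distinct sender/receiver, positive amount. -/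
def ValidTxns {m : ℕ} (L : List (Txn m)) : Prop :=
  ∀ t ∈ L, t.1 ≠ t.2.1 ∧ 0 < t.2.2

/-- `L` settles the balance vector `p`: for every participant `k`, the total amount sent
by `k` minus the total amount received by `k` equals `p k`. -/
def Settles {m : ℕ} (L : List (Txn m)) (p : Fin m → ℤ) : Prop :=
  ∀ k : Fin m,
    ((L.filter (fun t => t.1 = k)).map (fun t => t.2.2)).sum
      - ((L.filter (fun t => t.2.1 = k)).map (fun t => t.2.2)).sum = p k

/-! A zero-sum set of `c` balances can be settled with `c - 1` transactions: every member
pays to, or is paid by, one hub. Splitting the `n + 1` participants into a zero-sum subset and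
its complement therefore takes `n - 1` transactions. Conversely, fewer than `n` transactions
leave the graph of transactions on `n + 1` participants disconnected, and the participants out
of reach of the extra one only trade among themselves, so their balances sum to zero. -/

open Finset

variable {m : ℕ}

def txnFlow (t : Txn m) : Fin m → ℤ :=
  Pi.single t.1 t.2.2 - Pi.single t.2.1 t.2.2

def netOutflow (L : List (Txn m)) : Fin m → ℤ :=
  (L.map txnFlow).sum

theorem settles_iff_netOutflow_eq {L : List (Txn m)} {p : Fin m → ℤ} :
    Settles L p ↔ netOutflow L = p := by
  suffices h : ∀ k, netOutflow L k = ((L.filter (fun t => t.1 = k)).map (fun t => t.2.2)).sum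
      - ((L.filter (fun t => t.2.1 = k)).map (fun t => t.2.2)).sum by
    simp only [Settles, funext_iff, h]
  intro k
  induction L with
  | nil => simp [netOutflow]
  | cons t L ih =>
    simp only [netOutflow, List.map_cons, List.sum_cons] at ih ⊢
    rw [Pi.add_apply, ih, List.filter_cons, List.filter_cons]
    by_cases h1 : t.1 = k <;> by_cases h2 : t.2.1 = k <;>
      simp [txnFlow, h1, h2, eq_comm] <;> ring

theorem Settles.append {L₁ L₂ : List (Txn m)} {p q : Fin m → ℤ}
    (h₁ : Settles L₁ p) (h₂ : Settles L₂ q) : Settles (L₁ ++ L₂) (p + q) := by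
  rw [settles_iff_netOutflow_eq] at *
  simp [netOutflow, ← h₁, ← h₂]

def payTxn (i j : Fin m) (a : ℤ) : Txn m :=
  if 0 < a then (i, j, a) else (j, i, -a)

theorem txnFlow_payTxn (i j : Fin m) (a : ℤ) :
    txnFlow (payTxn i j a) = Pi.single i a - Pi.single j a := by
  unfold payTxn
  split_ifs
  · rfl
  · simp only [txnFlow, Pi.single_neg]
    abel

theorem payTxn_valid {i j : Fin m} {a : ℤ} (hij : i ≠ j) (ha : a ≠ 0) :
    (payTxn i j a).1 ≠ (payTxn i j a).2.1 ∧ 0 < (payTxn i j a).2.2 := by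
  unfold payTxn
  split_ifs with h
  · exact ⟨hij, h⟩
  · exact ⟨hij.symm, neg_pos.mpr (lt_of_le_of_ne (not_lt.mp h) ha)⟩

theorem exists_settles_indicator_of_sum_eq_zero (p : Fin m → ℤ) {S : Finset (Fin m)}
    (hS : S.Nonempty) (hSp : ∑ i ∈ S, p i = 0) :
    ∃ L : List (Txn m), ValidTxns L ∧ Settles L ((S : Set (Fin m)).indicator p) ∧
      L.length + 1 ≤ #S := by
  obtain ⟨h, hh⟩ := hS
  set T := (S.erase h).filter (p · ≠ 0)
  have hT : ∑ i ∈ T, p i = -p h := by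
    rw [sum_filter_ne_zero, sum_erase_eq_sub hh, hSp, zero_sub]
  refine ⟨T.toList.map (fun i => payTxn i h (p i)), ?_, ?_, ?_⟩
  · simp only [ValidTxns, List.forall_mem_map, mem_toList, T, mem_filter, mem_erase]
    exact fun i hi => payTxn_valid hi.1.1 hi.2
  · rw [settles_iff_netOutflow_eq, netOutflow, List.map_map, Function.comp_def,
      sum_map_toList]
    ext x
    simp only [Finset.sum_apply, txnFlow_payTxn, Pi.sub_apply, sum_sub_distrib,
      Finset.sum_pi_single]
    by_cases hx : x = h
    · subst hx
      simp [T, hh, hT]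
    · by_cases hpx : p x = 0 <;> simp [T, hx, hpx, Set.indicator_apply]
  · calc _ ≤ #(S.erase h) + 1 := by simpa using card_filter_le _ _
      _ = #S := card_erase_add_one hh

theorem exists_settles_length_add_two_le (p : Fin m → ℤ) (hp : ∑ i, p i = 0)
    {S : Finset (Fin m)} (hS : S.Nonempty) (hSc : Sᶜ.Nonempty) (hSp : ∑ i ∈ S, p i = 0) :
    ∃ L : List (Txn m), ValidTxns L ∧ Settles L p ∧ L.length + 2 ≤ m := by
  have hScp : ∑ i ∈ Sᶜ, p i = 0 := by rwa [← sum_compl_add_sum S, hSp, add_zero] at hp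
  obtain ⟨L₁, hv₁, hs₁, hl₁⟩ := exists_settles_indicator_of_sum_eq_zero p hS hSp
  obtain ⟨L₂, hv₂, hs₂, hl₂⟩ := exists_settles_indicator_of_sum_eq_zero p hSc hScp
  refine ⟨L₁ ++ L₂, fun t ht => (List.mem_append.mp ht).elim (hv₁ t) (hv₂ t), ?_, ?_⟩
  · have := hs₁.append hs₂
    rwa [coe_compl, Set.indicator_self_add_compl] at this
  · have := card_add_card_compl S
    simp only [List.length_append, Fintype.card_fin] at *
    omega

def txnGraph (L : List (Txn m)) : SimpleGraph (Fin m) :=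
  SimpleGraph.fromEdgeSet ↑(L.map fun t => s(t.1, t.2.1)).toFinset

theorem txnGraph_reachable {L : List (Txn m)} {t : Txn m} (ht : t ∈ L) :
    (txnGraph L).Reachable t.1 t.2.1 := by
  by_cases h : t.1 = t.2.1
  · exact h ▸ SimpleGraph.Reachable.refl _
  · refine SimpleGraph.Adj.reachable ?_
    simp only [txnGraph, SimpleGraph.fromEdgeSet_adj, Finset.mem_coe, List.mem_toFinset,
      List.mem_map]
    exact ⟨⟨t, ht, rfl⟩, h⟩

theorem natCard_edgeSet_txnGraph_le (L : List (Txn m)) :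
    Nat.card (txnGraph L).edgeSet ≤ L.length := by
  calc Nat.card (txnGraph L).edgeSet
      ≤ Nat.card (↑(L.map fun t => s(t.1, t.2.1)).toFinset : Set (Sym2 (Fin m))) :=
        Nat.card_mono (Finset.finite_toSet _) (by simp [txnGraph])
    _ ≤ L.length := by
        rw [Nat.card_coe_set_eq, Set.ncard_coe_finset]
        exact (List.toFinset_card_le _).trans (List.length_map _).le

theorem sum_netOutflow_eq_zero {L : List (Txn m)} {D : Finset (Fin m)}
    (hD : ∀ t ∈ L, t.1 ∈ D ↔ t.2.1 ∈ D) : ∑ x ∈ D, netOutflow L x = 0 := by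
  induction L with
  | nil => simp [netOutflow]
  | cons t L ih =>
    simp only [netOutflow, List.map_cons, List.sum_cons, Pi.add_apply, sum_add_distrib] at ih ⊢
    rw [ih fun u hu => hD u (List.mem_cons_of_mem t hu)]
    have := hD t List.mem_cons_self
    by_cases h : t.1 ∈ D <;> simp_all [txnFlow]

theorem Settles.exists_sum_eq_zero_of_length_add_two_le {L : List (Txn m)} {p : Fin m → ℤ}
    (h : Settles L p) (hL : L.length + 2 ≤ m) (v : Fin m) :
    ∃ D : Finset (Fin m), D.Nonempty ∧ v ∉ D ∧ ∑ x ∈ D, p x = 0 := by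
  classical
  have hG : ¬ (txnGraph L).Connected := fun hc => by
    have := hc.card_vert_le_card_edgeSet_add_one
    have := natCard_edgeSet_txnGraph_le L
    rw [Nat.card_fin] at *
    omega
  obtain ⟨w, hw⟩ : ∃ w, ¬ (txnGraph L).Reachable v w := by
    by_contra! hr
    have : Nonempty (Fin m) := ⟨v⟩
    exact hG ⟨fun a b => (hr a).symm.trans (hr b)⟩
  refine ⟨univ.filter (¬ (txnGraph L).Reachable v ·), ⟨w, by simpa using hw⟩,
    by simp, ?_⟩
  rw [← settles_iff_netOutflow_eq.mp h]
  refine sum_netOutflow_eq_zero fun t ht => ?_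
  have := txnGraph_reachable ht
  simp only [mem_filter, mem_univ, true_and]
  exact ⟨fun h₁ h₂ => h₁ (h₂.trans this.symm), fun h₁ h₂ => h₁ (h₂.trans this)⟩

theorem dite_val_lt_eq_snoc {n : ℕ} (k : Fin n → ℤ) (a : ℤ) :
    (fun i : Fin (n + 1) => if h : (i : ℕ) < n then k ⟨i, h⟩ else a) = Fin.snoc k a := by
  ext i
  simp [Fin.snoc, Fin.castLT]

/-- correctness of the reduction from Subset Sum to SEP.  For
`k : Fin n → ℤ` with sum `s`, extend to `n + 1` participants by giving the extra
participant balance `-s`.  Then some nonempty subset of the original values sums to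
zero iff `s = 0` or the extended instance can be settled with fewer than `n`
transactions. -/
theorem subset_sum_reduction_correct (n : ℕ) (hn : 1 ≤ n) (k : Fin n → ℤ) :
    (∃ S : Finset (Fin n), S.Nonempty ∧ ∑ i ∈ S, k i = 0) ↔
    ((∑ i, k i) = 0 ∨
      ∃ L : List (Txn (n + 1)),
        ValidTxns L ∧
        Settles L (fun i => if h : (i : ℕ) < n then k ⟨i,h⟩ else -(∑ j, k j)) ∧
        L.length < n) := by
  rw [dite_val_lt_eq_snoc]
  set p : Fin (n + 1) → ℤ := Fin.snoc k (-∑ j, k j)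
  have hp : ∑ i, p i = 0 := by simp [p, Fin.sum_univ_castSucc]
  constructor
  · rintro ⟨S, hS, hSk⟩
    have hlast : Fin.last n ∈ (S.map Fin.castSuccEmb)ᶜ := by simp [Fin.castSucc_ne_last]
    obtain ⟨L, hv, hs, hl⟩ := exists_settles_length_add_two_le p hp hS.map ⟨_, hlast⟩
      (by simpa [p] using hSk)
    exact Or.inr ⟨L, hv, hs, by omega⟩
  · rintro (hs | ⟨L, -, hs, hl⟩)
    · exact ⟨univ, univ_nonempty_iff.mpr ⟨⟨0, hn⟩⟩, hs⟩
    obtain ⟨D, hD, hlast, hDp⟩ :=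
      hs.exists_sum_eq_zero_of_length_add_two_le (by omega) (Fin.last n)
    have hD_sub : D ⊆ univ.map Fin.castSuccEmb := fun x hx => by
      simpa [Fin.exists_castSucc_eq] using ne_of_mem_of_not_mem hx hlast
    obtain ⟨S, -, rfl⟩ := subset_map_iff.mp hD_sub
    exact ⟨S, map_nonempty.mp hD, by simpa [p] using hDp⟩
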